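/- Let b be an S-regular graph over (X,m) for some S > 0, let λ > 0, and let ψ : X → ℝ be finitely supported with ‖Γ(ψ)‖_∞ ≤ 1. Then for every x ∈ X, (1/m(x)) · Σ_y b(x,y)·(cosh(λ·(ψ(x) − ψ(y))) − 1) ≤ (2/S²)·(cosh(λS) − 1). -/

import Mathlib

/-!
Since `(cosh t - 1) / t²` is increasing in `|t|` (its Taylor coefficients are nonnegative) and
`S`-regularity gives `|ψ x - ψ y| ≤ S` on every edge, each term satisfies
`cosh (λ (ψ x - ψ y)) - 1 ≤ (cosh (λ S) - 1) / S² · (ψ x - ψ y)²`.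
Summing against `b x y` and using `Γ(ψ)(x) ≤ 1`, i.e. `Σ_y b x y (ψ x - ψ y)² ≤ 2 m(x)`,
gives the bound.
-/

noncomputable section

/-- The energy density `Γ(f)(x) = (1/(2m(x))) Σ_y b(x,y)(f(x) − f(y))²`. -/
def gammaDensity {X : Type*} (b : X → X → ℝ) (m : X → ℝ) (f : X → ℝ) (x : X) : ℝ :=
  (2 * m x)⁻¹ * ∑' y, b x y * (f x - f y) ^ 2

/-- A graph is `S`-regular if `|ψ(x) − ψ(y)| ≤ S` for all neighbors `x ~ y` and every finitely
supported `ψ` with `‖Γ(ψ)‖_∞ ≤ 1`. -/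
def SRegular {X : Type*} (b : X → X → ℝ) (m : X → ℝ) (S : ℝ) : Prop :=
  ∀ ψ : X → ℝ, (Function.support ψ).Finite → (∀ z, gammaDensity b m ψ z ≤ 1) →
    ∀ x y, 0 < b x y → |ψ x - ψ y| ≤ S

open Real Nat

theorem Real.hasSum_cosh_sub_one (r : ℝ) :
    HasSum (fun n : ℕ => r ^ (2 * (n + 1)) / ((2 * (n + 1))! : ℝ)) (cosh r - 1) := by
  simpa using (hasSum_nat_add_iff' 1).mpr (Real.hasSum_cosh r)

theorem Real.sq_mul_cosh_sub_one_le {a c : ℝ} (h : a ^ 2 ≤ c ^ 2) :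
    c ^ 2 * (cosh a - 1) ≤ a ^ 2 * (cosh c - 1) := by
  refine hasSum_le (fun n => ?_) ((hasSum_cosh_sub_one a).mul_left _)
    ((hasSum_cosh_sub_one c).mul_left _)
  have hpow : (a ^ 2) ^ n ≤ (c ^ 2) ^ n := pow_le_pow_left₀ (sq_nonneg a) h n
  simp only [mul_add, mul_one, pow_add, pow_mul, ← mul_div_assoc]
  gcongr ?_ / _
  calc c ^ 2 * ((a ^ 2) ^ n * a ^ 2) = a ^ 2 * c ^ 2 * (a ^ 2) ^ n := by ring
    _ ≤ a ^ 2 * c ^ 2 * (c ^ 2) ^ n := by gcongr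
    _ = a ^ 2 * ((c ^ 2) ^ n * c ^ 2) := by ring

theorem Real.sq_mul_cosh_mul_sub_one_le {l d S : ℝ} (hl : l ≠ 0) (hd : |d| ≤ S) :
    S ^ 2 * (cosh (l * d) - 1) ≤ d ^ 2 * (cosh (l * S) - 1) := by
  have hdS : (l * d) ^ 2 ≤ (l * S) ^ 2 := by
    rw [mul_pow, mul_pow, ← sq_abs d]
    gcongr
  have hl2 : 0 < l ^ 2 := by positivity
  have := sq_mul_cosh_sub_one_le hdS
  rw [mul_pow, mul_pow, mul_assoc, mul_assoc] at this
  exact le_of_mul_le_mul_left this hl2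

theorem sum_mul_sq_le_of_gammaDensity_le {X : Type*} {b : X → X → ℝ} {m : X → ℝ}
    {f : X → ℝ} {x : X} (hm : 0 < m x) (hb : (Function.support (b x)).Finite)
    (hΓ : gammaDensity b m f x ≤ 1) :
    ∑ y ∈ hb.toFinset, b x y * (f x - f y) ^ 2 ≤ 2 * m x := by
  rwa [gammaDensity, tsum_eq_sum' (hb.coe_toFinset ▸ Function.support_mul_subset_left (b x) _),
    inv_mul_le_iff₀ (by positivity), mul_one] at hΓ

theorem stmt10_general {X : Type*}
    (b : X → X → ℝ) (m : X → ℝ)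
    (hb_nonneg : ∀ x y, 0 ≤ b x y)
    (hlf : ∀ x, (Function.support (b x)).Finite)
    (hm_pos : ∀ x, 0 < m x)
    (S : ℝ) (hS : 0 < S) (hreg : SRegular b m S)
    (l : ℝ) (hl : 0 < l)
    (ψ : X → ℝ) (hψ_fin : (Function.support ψ).Finite)
    (hψ_Γ : ∀ z, gammaDensity b m ψ z ≤ 1) :
    ∀ x : X, (m x)⁻¹ * ∑' y, b x y * (Real.cosh (l * (ψ x - ψ y)) - 1) ≤
      2 / S ^ 2 * (Real.cosh (l * S) - 1) := by
  intro x
  set C := cosh (l * S) - 1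
  have hC : 0 ≤ C := sub_nonneg.mpr (one_le_cosh _)
  have hterm : ∀ y, S ^ 2 * (b x y * (cosh (l * (ψ x - ψ y)) - 1)) ≤
      C * (b x y * (ψ x - ψ y) ^ 2) := by
    intro y
    rcases (hb_nonneg x y).eq_or_lt with hb0 | hb0
    · simp [← hb0]
    · have hedge := sq_mul_cosh_mul_sub_one_le hl.ne' (hreg ψ hψ_fin hψ_Γ x y hb0)
      linarith [mul_le_mul_of_nonneg_left hedge hb0.le]
  set F := (hlf x).toFinset
  have hsum : S ^ 2 * ∑ y ∈ F, b x y * (cosh (l * (ψ x - ψ y)) - 1) ≤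
      C * (2 * m x) :=
    calc _ = ∑ y ∈ F, S ^ 2 * (b x y * (cosh (l * (ψ x - ψ y)) - 1)) :=
          Finset.mul_sum ..
      _ ≤ ∑ y ∈ F, C * (b x y * (ψ x - ψ y) ^ 2) :=
          Finset.sum_le_sum fun y _ => hterm y
      _ = C * ∑ y ∈ F, b x y * (ψ x - ψ y) ^ 2 := (Finset.mul_sum ..).symm
      _ ≤ C * (2 * m x) := by
          gcongr
          exact sum_mul_sq_le_of_gammaDensity_le (hm_pos x) (hlf x) (hψ_Γ x)
  rw [tsum_eq_sum' ((hlf x).coe_toFinset ▸ Function.support_mul_subset_left (b x) _),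
    inv_mul_le_iff₀ (hm_pos x), div_mul_eq_mul_div, mul_div_assoc', le_div_iff₀ (by positivity)]
  linarith

theorem stmt10 {X : Type*} [Countable X]
    (b : X → X → ℝ) (m : X → ℝ)
    (hb_nonneg : ∀ x y, 0 ≤ b x y) (hb_symm : ∀ x y, b x y = b y x)
    (hb_loop : ∀ x, b x x = 0)
    (hlf : ∀ x, (Function.support (b x)).Finite)
    (hm_pos : ∀ x, 0 < m x)
    (S : ℝ) (hS : 0 < S) (hreg : SRegular b m S)
    (l : ℝ) (hl : 0 < l)
    (ψ : X → ℝ) (hψ_fin : (Function.support ψ).Finite)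
    (hψ_Γ : ∀ z, gammaDensity b m ψ z ≤ 1) :
    ∀ x : X, (m x)⁻¹ * ∑' y, b x y * (Real.cosh (l * (ψ x - ψ y)) - 1) ≤
      2 / S ^ 2 * (Real.cosh (l * S) - 1) :=
  stmt10_general b m hb_nonneg hlf hm_pos S hS hreg l hl ψ hψ_fin hψ_Γ

end
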